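/- Let A ⊆ ℕ^ℕ be open in the product topology on ℕ^ℕ (with ℕ discrete) and suppose player I does not have a winning strategy in the Gale–Stewart game with payoff set A. Then there exists a strategy τ for player II such that for every finite position s of even length produced by a play according to τ, player I does not have a winning strategy in the Gale–Stewart game with payoff set A/s; moreover, any such strategy τ is a winning strategy for player II in the game with payoff set A. -/

import Mathlib

/-- The finite position given by the first `n` moves of the infinite play `x`. -/
def position (x : ℕ → ℕ) (n : ℕ) : List ℕ := List.ofFn fun i : Fin n => x i.val

/-- `x` is an infinite play in which player I (moving at even indices) follows
the strategy `σ`, i.e. each even-indexed move is the one `σ` assigns to the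
current finite position. Player II's moves are arbitrary. -/
def FollowsI (σ : List ℕ → ℕ) (x : ℕ → ℕ) : Prop :=
  ∀ n : ℕ, Even n → x n = σ (position x n)

/-- `x` is an infinite play in which player II (moving at odd indices) follows
the strategy `τ`. Player I's moves are arbitrary. -/
def FollowsII (τ : List ℕ → ℕ) (x : ℕ → ℕ) : Prop :=
  ∀ n : ℕ, Odd n → x n = τ (position x n)

/-- `σ` is a winning strategy for player I in the Gale–Stewart game with payoff
set `A`: every play in which I follows `σ` lands in `A`. -/
def WinningStratI (A : Set (ℕ → ℕ)) (σ : List ℕ → ℕ) : Prop :=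
  ∀ x : ℕ → ℕ, FollowsI σ x → x ∈ A

/-- `τ` is a winning strategy for player II in the Gale–Stewart game with payoff
set `A`: every play in which II follows `τ` avoids `A`. -/
def WinningStratII (A : Set (ℕ → ℕ)) (τ : List ℕ → ℕ) : Prop :=
  ∀ x : ℕ → ℕ, FollowsII τ x → x ∉ A

/-- The Gale–Stewart game with payoff set `A` is determined: one of the two
players has a winning strategy. -/
def Determined (A : Set (ℕ → ℕ)) : Prop :=
  (∃ σ, WinningStratI A σ) ∨ (∃ τ, WinningStratII A τ)

/-- The concatenation `s⌢x` of a finite sequence `s` with an infinite sequence `x`. -/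
def cat (s : List ℕ) (x : ℕ → ℕ) : ℕ → ℕ :=
  fun n => if h : n < s.length then s.get ⟨n, h⟩ else x (n - s.length)

/-- The shifted set `B/s = { x : s⌢x ∈ B }`. -/
def shift (B : Set (ℕ → ℕ)) (s : List ℕ) : Set (ℕ → ℕ) := {x | cat s x ∈ B}

/-- `s` is a finite position produced by a (partial) play in which player II
follows the strategy `τ`: at every odd index below `s.length`, the move recorded
in `s` is the one `τ` assigns to the preceding position. -/
def ConsistentPosII (τ : List ℕ → ℕ) (s : List ℕ) : Prop :=
  ∀ k (h : k < s.length), Odd k → s.get ⟨k, h⟩ = τ (s.take k)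

/-!
If I has no winning strategy from a position `s`, then against every move `a` of I some reply
`b` of II leaves I without a winning strategy from `s ++ [a, b]`: otherwise I could open with `a`
and, after II's answer `b`, continue with a winning strategy chosen for `b`. A strategy for II
that always gives such a reply therefore keeps I without a winning strategy at every even
position it produces. Such a strategy wins for II when `A` is open, since a play in `A` has a
long even prefix `s` all of whose extensions lie in `A`, and then I wins `A/s` trivially.
-/

open PiNat Filter

lemma position_succ (x : ℕ → ℕ) (n : ℕ) :
    position x (n + 1) = x 0 :: position (fun k => x (k + 1)) n :=
  List.ofFn_succ

lemma position_take (x : ℕ → ℕ) {k n : ℕ} (h : k ≤ n) :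
    (position x n).take k = position x k :=
  List.ext_getElem (by simp [position]; omega) (by simp [position])

lemma cat_position_apply_of_lt (x z : ℕ → ℕ) {n i : ℕ} (hi : i < n) :
    cat (position x n) z i = x i := by
  simp [cat, position, hi]

lemma cat_position_drop (x : ℕ → ℕ) (n : ℕ) :
    cat (position x n) (fun k => x (k + n)) = x := by
  funext i
  by_cases hi : i < n
  · exact cat_position_apply_of_lt x _ hi
  · simp [cat, position, hi]; congr; omega

lemma cat_nil (x : ℕ → ℕ) : cat [] x = x := by
  funext n; simp [cat]

lemma cat_append (s t : List ℕ) (x : ℕ → ℕ) : cat (s ++ t) x = cat s (cat t x) := by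
  funext n
  simp only [cat, List.length_append, List.get_eq_getElem, List.getElem_append]
  split_ifs <;> first | rfl | omega | (congr 1; omega)

lemma shift_nil (A : Set (ℕ → ℕ)) : shift A [] = A := by
  simp [shift, cat_nil]

lemma shift_append (A : Set (ℕ → ℕ)) (s t : List ℕ) :
    shift A (s ++ t) = shift (shift A s) t := by
  ext x; simp [shift, cat_append]

lemma consistentPosII_position {τ : List ℕ → ℕ} {x : ℕ → ℕ} (hx : FollowsII τ x) (n : ℕ) :
    ConsistentPosII τ (position x n) := by
  intro k hk hodd
  rw [position_take x (by simpa [position] using hk.le)]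
  simpa [position] using hx k hodd

lemma consistentPosII_append_singleton {τ : List ℕ → ℕ} {t : List ℕ} {b : ℕ} :
    ConsistentPosII τ (t ++ [b]) ↔ ConsistentPosII τ t ∧ (Odd t.length → b = τ t) := by
  constructor
  · intro h
    refine ⟨fun k hk hodd => ?_, fun hodd => by simpa using h t.length (by simp) hodd⟩
    simpa [List.getElem_append_left hk, List.take_append_of_le_length hk.le] using
      h k (by simp; omega) hodd
  · rintro ⟨ht, hb⟩ k hk hodd
    rcases Nat.lt_succ_iff_lt_or_eq.1 (by simpa using hk) with hk | rfl
    · simpa [List.getElem_append_left hk, List.take_append_of_le_length hk.le] using ht k hk hodd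
    · simpa using hb hodd

lemma List.exists_eq_append_pair {α : Type*} {s : List α} {n : ℕ} (hs : s.length = n + 2) :
    ∃ t a b, s = t ++ [a, b] ∧ t.length = n := by
  obtain ⟨a, b, hab⟩ := List.length_eq_two.1 (show (s.drop n).length = 2 by simp; omega)
  exact ⟨s.take n, a, b, by rw [← hab, List.take_append_drop], by simp; omega⟩

lemma eventually_cylinder_subset {E : ℕ → Type*} [∀ n, TopologicalSpace (E n)]
    [∀ n, DiscreteTopology (E n)] {A : Set (∀ n, E n)} (hA : IsOpen A) {x : ∀ n, E n}
    (hx : x ∈ A) : ∀ᶠ n in atTop, cylinder x n ⊆ A := by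
  obtain ⟨_, ⟨y, N, rfl⟩, hxy, hyA⟩ :=
    (isTopologicalBasis_cylinders E).exists_subset_of_mem_open hx hA
  rw [mem_cylinder_iff_eq] at hxy
  exact eventually_atTop.2 ⟨N, fun n hn => (cylinder_anti x hn).trans (hxy ▸ hyA)⟩

lemma exists_not_winningStratI_shift_pair {B : Set (ℕ → ℕ)} (hB : ¬ ∃ σ, WinningStratI B σ)
    (a : ℕ) : ∃ b, ¬ ∃ σ, WinningStratI (shift B [a, b]) σ := by
  by_contra! hwin
  choose σ hσ using hwin
  refine hB ⟨fun p => match p with | _ :: b :: q => σ b q | _ => a, fun x hx => ?_⟩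
  have hx0 : x 0 = a := hx 0 (by decide)
  have hy : FollowsI (σ (x 1)) (fun k => x (k + 2)) := fun n hn => by
    simpa [position_succ] using hx (n + 2) (by simpa [Nat.even_add] using hn)
  have hx2 : position x 2 = [a, x 1] := by simp [hx0, position]
  have := hσ (x 1) _ hy
  rwa [shift, Set.mem_ofPred_eq, ← hx2, cat_position_drop] at this

noncomputable def goodStratII (A : Set (ℕ → ℕ)) (p : List ℕ) : ℕ :=
  Classical.epsilon fun b => ¬ ∃ σ, WinningStratI (shift A (p ++ [b])) σ

lemma goodStratII_spec {A : Set (ℕ → ℕ)} {p : List ℕ}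
    (h : ∃ b, ¬ ∃ σ, WinningStratI (shift A (p ++ [b])) σ) :
    ¬ ∃ σ, WinningStratI (shift A (p ++ [goodStratII A p])) σ :=
  Classical.epsilon_spec h

lemma not_winningStratI_shift_of_consistentPosII_goodStratII {A : Set (ℕ → ℕ)}
    (h : ¬ ∃ σ, WinningStratI A σ) :
    ∀ (m : ℕ) (s : List ℕ), s.length = 2 * m → ConsistentPosII (goodStratII A) s →
      ¬ ∃ σ, WinningStratI (shift A s) σ
  | 0, s, hs, _ => by rw [List.length_eq_zero_iff.1 hs, shift_nil]; exact h
  | m + 1, s, hs, hcons => by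
    obtain ⟨t, a, b, rfl, ht⟩ := List.exists_eq_append_pair (n := 2 * m) (by omega)
    have hcons' : ConsistentPosII (goodStratII A) (t ++ [a] ++ [b]) := by simpa using hcons
    rw [consistentPosII_append_singleton, consistentPosII_append_singleton] at hcons'
    obtain ⟨⟨htcons, -⟩, hb⟩ := hcons'
    obtain ⟨b', hb'⟩ := exists_not_winningStratI_shift_pair
      (not_winningStratI_shift_of_consistentPosII_goodStratII h m t ht htcons) a
    rw [← shift_append] at hb'
    rw [hb (by simp [ht])]
    simpa using goodStratII_spec (p := t ++ [a]) ⟨b', by simpa using hb'⟩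

lemma winningStratII_of_forall_not_winningStratI_shift {A : Set (ℕ → ℕ)} (hA : IsOpen A)
    {τ : List ℕ → ℕ}
    (hτ : ∀ s, Even s.length → ConsistentPosII τ s → ¬ ∃ σ, WinningStratI (shift A s) σ) :
    WinningStratII A τ := by
  intro x hx hxA
  obtain ⟨N, hN⟩ := eventually_atTop.1 (eventually_cylinder_subset hA hxA)
  refine hτ (position x (2 * N)) (by simp [position]) (consistentPosII_position hx _)
    ⟨fun _ => 0, fun z _ => hN (2 * N) (by omega) ?_⟩
  exact mem_cylinder_iff.2 fun i hi => cat_position_apply_of_lt x z hi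

/-- If `A` is open and player I has no winning strategy in the game with payoff `A`,
then there is a strategy `τ` for player II such that I has no winning strategy in
the game with payoff `A/s` for any even-length position `s` arising from a play
according to `τ`; moreover, any such `τ` is a winning strategy for player II. -/
theorem exists_good_stratII (A : Set (ℕ → ℕ)) (hA : IsOpen A)
    (h : ¬ ∃ σ, WinningStratI A σ) :
    (∃ τ : List ℕ → ℕ, ∀ s : List ℕ, Even s.length → ConsistentPosII τ s →
        ¬ ∃ σ, WinningStratI (shift A s) σ) ∧
    (∀ τ : List ℕ → ℕ, (∀ s : List ℕ, Even s.length → ConsistentPosII τ s →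
        ¬ ∃ σ, WinningStratI (shift A s) σ) → WinningStratII A τ) := by
  refine ⟨⟨goodStratII A, fun s hs hcons => ?_⟩,
    fun τ hτ => winningStratII_of_forall_not_winningStratI_shift hA hτ⟩
  obtain ⟨m, hm⟩ := hs
  exact not_winningStratI_shift_of_consistentPosII_goodStratII h m s (by omega) hcons
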